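/- Claim (APP value far from the syndrome). Let d ≥ 3, let s be a syndrome on the toric lattice T_d, and let q be a qubit and i ≥ 0 an iteration such that no vertex of the decoding tree T_{i,q} is associated with an unsatisfied check of s. Then the minimal root-unlabeled configuration on T_{i,q} has weight 0, the minimal root-labeled configuration has weight 1 + 2i, and hence APP(q,i) = 1 + 2i. -/

import Mathlib

namespace ToricMS

/-- Checks of the toric lattice: vertices of the `d × d` torus grid. -/
abbrev V (d : ℕ) : Type := ZMod d × ZMod d

/-- The toric lattice `T_d`: two checks are adjacent iff their difference is
`(±1, 0)` or `(0, ±1)` mod `d` (for `d ≥ 3` the inequality clause is automatic). -/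
def Toric (d : ℕ) : SimpleGraph (V d) where
  Adj v w := v ≠ w ∧
    (v - w = (1, 0) ∨ v - w = (-1, 0) ∨ v - w = (0, 1) ∨ v - w = (0, -1))
  symm := ⟨by
    rintro v w ⟨hne, h⟩
    refine ⟨hne.symm, ?_⟩
    have hswap : w - v = -(v - w) := by ring
    rcases h with h | h | h | h <;> rw [hswap, h] <;> simp [Prod.ext_iff]⟩
  loopless := ⟨fun v h => h.1 rfl⟩

/-- Weight of an error: the number of qubits (edges) in error. -/
noncomputable def wt {d : ℕ} (e : (Toric d).edgeSet → ZMod 2) : ℕ :=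
  Nat.card {q : (Toric d).edgeSet // e q = 1}

/-- Syndrome of an error: mod-2 sum of the error over the qubits incident to each check. -/
noncomputable def synd {d : ℕ} (e : (Toric d).edgeSet → ZMod 2) : V d → ZMod 2 :=
  fun c => (Nat.card {q : (Toric d).edgeSet // e q = 1 ∧ c ∈ (q : Sym2 (V d))} : ZMod 2)

/-- A degenerate error: some different error of no larger weight has the same syndrome. -/
def Degenerate {d : ℕ} (e : (Toric d).edgeSet → ZMod 2) : Prop :=
  ∃ e' : (Toric d).edgeSet → ZMod 2, e' ≠ e ∧ wt e' ≤ wt e ∧ synd e' = synd e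

/-- The fake syndrome `s^c` having `c` as its only unsatisfied check. -/
def fakeS (d : ℕ) (c : V d) : V d → ZMod 2 := fun c' => if c' = c then 1 else 0

/-- The error `ε⁴` consisting of 4 consecutive collinear (horizontal) qubits. -/
def eps4 (d : ℕ) : (Toric d).edgeSet → ZMod 2 := fun q =>
  if q.val = Sym2.mk (((0 : ZMod d), (0 : ZMod d)) : V d) ((1, 0) : V d)
      ∨ q.val = Sym2.mk (((1 : ZMod d), (0 : ZMod d)) : V d) ((2, 0) : V d)
      ∨ q.val = Sym2.mk (((2 : ZMod d), (0 : ZMod d)) : V d) ((3, 0) : V d)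
      ∨ q.val = Sym2.mk (((3 : ZMod d), (0 : ZMod d)) : V d) ((4, 0) : V d)
  then 1 else 0

/-- Walk without return (wwr) in `T_d`, as its list of visited checks. -/
def IsWWR (d : ℕ) (l : List (V d)) : Prop :=
  l.Chain' (Toric d).Adj ∧ ∀ j : ℕ, j + 2 < l.length → l[j]? ≠ l[j + 2]?

/-- A walk starting with the root edge `e_q = {a, b}` (either orientation allowed). -/
def StartsQ (d : ℕ) (a b : V d) (l : List (V d)) : Prop :=
  l.take 2 = [a, b] ∨ l.take 2 = [b, a]

/-- Vertices of the decoding tree `T_{i,q}` (`q` the edge `{a,b}`): wwrs of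
length `1, …, i` starting with `e_q`, encoded by their check lists. -/
def IsTreeVertex (d : ℕ) (a b : V d) (i : ℕ) (l : List (V d)) : Prop :=
  IsWWR d l ∧ StartsQ d a b l ∧ 2 ≤ l.length ∧ l.length ≤ i + 1

/-- Edges of the decoding tree `T_{i,q}`: wwrs of length `1, …, i+1` starting with
`e_q` (an edge is identified with the wwr ending with it), where the root edge is
canonically represented by `[a, b]`. -/
def IsTreeEdge (d : ℕ) (a b : V d) (i : ℕ) (l : List (V d)) : Prop :=
  IsWWR d l ∧ StartsQ d a b l ∧ 2 ≤ l.length ∧ l.length ≤ i + 2 ∧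
    (l.length = 2 → l = [a, b])

/-- Dangling edges: tree edges at maximal depth, with a single endpoint in the tree. -/
def IsDangling (d : ℕ) (a b : V d) (i : ℕ) (l : List (V d)) : Prop :=
  IsTreeEdge d a b i l ∧ l.length = i + 2

/-- The check of `T_d` associated with a tree vertex. -/
def vcheck {d : ℕ} (l : List (V d)) : V d := l.getLastD 0

/-- Incidence between a tree vertex and a tree edge. -/
def IncidentVE {d : ℕ} (lv le : List (V d)) : Prop :=
  lv = le ∨ lv = le.dropLast ∨ (le.length = 2 ∧ lv = le.reverse)

/-- A configuration on the decoding tree for syndrome `s`: an edge labelling such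
that around every tree vertex, the mod-2 sum of the labels of the incident edges
equals the syndrome value of the associated check. -/
def IsConfig (d : ℕ) (a b : V d) (i : ℕ) (s : V d → ZMod 2)
    (C : List (V d) → ZMod 2) : Prop :=
  ∀ lv, IsTreeVertex d a b i lv →
    (Nat.card {le : List (V d) //
        IsTreeEdge d a b i le ∧ IncidentVE lv le ∧ C le = 1} : ZMod 2) = s (vcheck lv)

/-- Weight of a configuration: its number of labeled tree edges. -/
noncomputable def cweight (d : ℕ) (a b : V d) (i : ℕ) (C : List (V d) → ZMod 2) : ℕ :=
  Nat.card {le : List (V d) // IsTreeEdge d a b i le ∧ C le = 1}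

/-- Minimal weight of a configuration whose root edge has label `r`. -/
noncomputable def minW (d : ℕ) (a b : V d) (i : ℕ) (s : V d → ZMod 2) (r : ZMod 2) : ℕ :=
  sInf {n : ℕ | ∃ C : List (V d) → ZMod 2,
    IsConfig d a b i s C ∧ C [a, b] = r ∧ cweight d a b i C = n}

/-- A posteriori value of the (oriented) qubit `(a,b)` at iteration `i` computed by
min-sum (Wiberg): minimal root-labeled weight minus minimal root-unlabeled weight. -/
noncomputable def APPo (d : ℕ) (s : V d → ZMod 2) (i : ℕ) (a b : V d) : ℤ :=
  (minW d a b i s 1 : ℤ) - (minW d a b i s 0 : ℤ)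

/-- A posteriori value of a qubit (an unordered edge) at iteration `i`. -/
noncomputable def APP (d : ℕ) (s : V d → ZMod 2) (i : ℕ) : Sym2 (V d) → ℤ :=
  Sym2.lift ⟨fun a b => min (APPo d s i a b) (APPo d s i b a), fun _ _ => min_comm _ _⟩

/-- The MS hard-decision estimate at iteration `i`. -/
noncomputable def hatE (d : ℕ) (s : V d → ZMod 2) (i : ℕ) : (Toric d).edgeSet → ZMod 2 :=
  fun q => if APP d s i q.val < 0 then 1 else 0

/-- `s` is decoded by MS in `k` iterations: the estimate satisfies the syndrome at
iteration `k` and not before. -/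
def DecodedIn (d : ℕ) (s : V d → ZMod 2) (k : ℕ) : Prop :=
  1 ≤ k ∧ synd (hatE d s k) = s ∧ ∀ j, 1 ≤ j → j < k → synd (hatE d s j) ≠ s

/-- The error `e` is correctly decoded by MS. -/
def CorrectlyDecoded {d : ℕ} (e : (Toric d).edgeSet → ZMod 2) : Prop :=
  ∃ k, DecodedIn d (synd e) k ∧ hatE d (synd e) k = e

/-- Length of the longest common prefix of two lists. -/
def cpl {d : ℕ} : List (V d) → List (V d) → ℕ
  | x :: xs, y :: ys => if x = y then cpl xs ys + 1 else 0
  | _, _ => 0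

/-- Distance (number of edges of the connecting path) between two tree vertices. -/
def treeDist {d : ℕ} (lu lv : List (V d)) : ℕ :=
  if lu.take 2 = lv.take 2 then lu.length + lv.length - 2 * cpl lu lv
  else lu.length + lv.length - 3

/-- Strip a dangling edge down to its unique endpoint vertex. -/
def stripD {d : ℕ} (i : ℕ) (l : List (V d)) : List (V d) :=
  if l.length = i + 2 then l.dropLast else l

/-- `le` is an edge on the (unique) tree path between tree vertices `lu` and `lv`. -/
def OnPathVV {d : ℕ} (lu lv le : List (V d)) : Prop :=
  if lu.take 2 = lv.take 2 then (le <+: lu ∨ le <+: lv) ∧ cpl lu lv < le.length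
  else ((le <+: lu ∨ le <+: lv) ∧ 3 ≤ le.length) ∨ le.length = 2

/-- `lw` is a vertex on the (unique) tree path between tree vertices `lu` and `lv`. -/
def OnPathVertexVV {d : ℕ} (lu lv lw : List (V d)) : Prop :=
  if lu.take 2 = lv.take 2 then (lw <+: lu ∨ lw <+: lv) ∧ cpl lu lv ≤ lw.length
  else (lw <+: lu ∨ lw <+: lv) ∧ 2 ≤ lw.length

/-- A link of the decoding tree `T_{i,q}` for syndrome `s`: a path in the tree
whose vertex endpoints (if any) are associated with unsatisfied checks; an
endpoint is either a tree vertex or a dangling edge. -/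
structure Link (d : ℕ) (a b : V d) (i : ℕ) (s : V d → ZMod 2) where
  endA : List (V d)
  endB : List (V d)
  hA : IsTreeVertex d a b i endA ∨ IsDangling d a b i endA
  hB : IsTreeVertex d a b i endB ∨ IsDangling d a b i endB
  hAu : IsTreeVertex d a b i endA → s (vcheck endA) = 1
  hBu : IsTreeVertex d a b i endB → s (vcheck endB) = 1
  hne : endA ≠ endB

variable {d : ℕ} {a b : V d} {i : ℕ} {s : V d → ZMod 2}

/-- The tree edges lying on a link. -/
def Link.on (L : Link d a b i s) (le : List (V d)) : Prop :=
  OnPathVV (stripD i L.endA) (stripD i L.endB) le ∨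
    (L.endA.length = i + 2 ∧ le = L.endA) ∨ (L.endB.length = i + 2 ∧ le = L.endB)

/-- The length (number of edges) of a link. -/
def Link.len (L : Link d a b i s) : ℕ :=
  treeDist (stripD i L.endA) (stripD i L.endB) +
    (if L.endA.length = i + 2 then 1 else 0) + (if L.endB.length = i + 2 then 1 else 0)

/-- A proper link: both endpoints are (unsatisfied) tree vertices. -/
def Link.Proper (L : Link d a b i s) : Prop :=
  IsTreeVertex d a b i L.endA ∧ IsTreeVertex d a b i L.endB

/-- A labeled link (w.r.t. a configuration `C`): all its edges are labeled. -/
def Link.IsLabeled (L : Link d a b i s) (C : List (V d) → ZMod 2) : Prop :=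
  ∀ le, IsTreeEdge d a b i le → L.on le → C le = 1

/-- A maximal labeled link: it cannot be extended into a longer labeled link. -/
def Link.IsMaxLabeled (L : Link d a b i s) (C : List (V d) → ZMod 2) : Prop :=
  L.IsLabeled C ∧
    ∀ L' : Link d a b i s, L'.IsLabeled C → (∀ le, L.on le → L'.on le) → L'.len ≤ L.len

/-- An `I`-link: a proper link of length 4 not containing the root, descending
four levels of the tree. -/
def Link.IsI (L : Link d a b i s) : Prop :=
  L.Proper ∧ L.len = 4 ∧ ¬ L.on [a, b] ∧
    (L.endA.length + 4 = L.endB.length ∨ L.endB.length + 4 = L.endA.length)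

/-- A `Γ`-link: a proper link of length 4 not containing the root, going up one
level then down three. -/
def Link.IsGamma (L : Link d a b i s) : Prop :=
  L.Proper ∧ L.len = 4 ∧ ¬ L.on [a, b] ∧
    (L.endA.length + 2 = L.endB.length ∨ L.endB.length + 2 = L.endA.length)

/-- A `Λ`-link: a proper link of length 4 not containing the root, going up two
levels then down two (its endpoints are at the same depth). -/
def Link.IsLambda (L : Link d a b i s) : Prop :=
  L.Proper ∧ L.len = 4 ∧ ¬ L.on [a, b] ∧ L.endA.length = L.endB.length

/-- Distance of a tree vertex to the bottom: minimal length of a path starting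
at that vertex and ending with a dangling edge. -/
noncomputable def distToBottom (d : ℕ) (a b : V d) (i : ℕ) (lv : List (V d)) : ℕ :=
  sInf {n : ℕ | ∃ le, IsDangling d a b i le ∧ n = treeDist lv le.dropLast + 1}

/-- A walk in the decoding tree: a sequence of tree edges `es` together with the
sequence `vs` of tree vertices through which consecutive edges are traversed. -/
structure TreeWalk (d : ℕ) (a b : V d) (i : ℕ) where
  es : List (List (V d))
  vs : List (List (V d))
  hlen : vs.length + 1 = es.length
  hes : ∀ le ∈ es, IsTreeEdge d a b i le
  hvs : ∀ lv ∈ vs, IsTreeVertex d a b i lv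
  hinc : ∀ (j : ℕ) (hj : j < vs.length),
    IncidentVE (vs[j]'hj) (es[j]'(by omega)) ∧ IncidentVE (vs[j]'hj) (es[j + 1]'(by omega))
  htrav : ∀ (j : ℕ) (hj : j + 1 < vs.length), vs[j]'(by omega) ≠ vs[j + 1]'hj

/-- The four unit directions of the square lattice. -/
def dirVec (d : ℕ) : Fin 4 → V d := ![(1, 0), (0, 1), (-1, 0), (0, -1)]

/-- A rigid embedding of a patch `K` of `T_d` into `T_{d'}`: an injective map
which, up to a fixed symmetry `g` of the square (an element of the dihedral
group acting on the four directions), preserves the local square-lattice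
structure — hence it is an injective graph homomorphism mapping plaquettes to
plaquettes. -/
def IsRigidEmbed (d d' : ℕ) (K : Set (V d)) (φ : V d → V d') : Prop :=
  Set.InjOn φ K ∧ ∃ g : Fin 4 → Fin 4, Function.Bijective g ∧
    (∀ j, g (j + 2) = g j + 2) ∧
    ∀ x ∈ K, ∀ j : Fin 4, x + dirVec d j ∈ K →
      φ (x + dirVec d j) = φ x + dirVec d' (g j)

/-- The embedding of a syndrome under an embedding map `φ`. -/
noncomputable def embedSynd (d d' : ℕ) (s : V d → ZMod 2) (φ : V d → V d') :
    V d' → ZMod 2 :=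
  fun c' => @ite _ (∃ c, s c = 1 ∧ φ c = c') (Classical.propDecidable _) 1 0

section Helpers

open List in
private lemma chain'_two {α : Type*} {R : α → α → Prop} {x y : α} (h : R x y) :
    List.Chain' R [x, y] := List.isChain_pair.mpr h

variable {d : ℕ}

/-- The straight path `x, x+w, x+2w, …` of length `k`. -/
private def pL (x w : V d) (k : ℕ) : List (V d) :=
  (List.range k).map (fun j => x + j • w)

@[simp] private lemma pL_length (x w : V d) (k : ℕ) : (pL x w k).length = k := by
  simp [pL]

private lemma pL_getElem (x w : V d) (k j : ℕ) (h : j < (pL x w k).length) :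
    (pL x w k)[j] = x + j • w := by
  simp [pL]

private lemma pL_getElem? {x w : V d} {k j : ℕ} (h : j < k) :
    (pL x w k)[j]? = some (x + j • w) := by
  simp [pL, List.getElem?_map, List.getElem?_range h]

private lemma pL_two (x w : V d) : pL x w 2 = [x, x + w] := by
  simp [pL, List.range_succ]

private lemma pL_dropLast (x w : V d) (k : ℕ) : (pL x w (k + 1)).dropLast = pL x w k := by
  simp [pL, List.range_succ]

private lemma pL_take (x w : V d) (k m : ℕ) : (pL x w k).take m = pL x w (min m k) := by
  simp [pL, ← List.map_take, List.take_range]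

private lemma pL_ne (x y w w' : V d) (hxy : x ≠ y) {k m : ℕ} (hk : 1 ≤ k) (hm : 1 ≤ m) :
    pL x w k ≠ pL y w' m := by
  intro h
  have h0 : (pL x w k)[0]? = (pL y w' m)[0]? := by rw [h]
  rw [pL_getElem? (by omega), pL_getElem? (by omega)] at h0
  simp at h0
  exact hxy h0

private lemma pL_inj (x w : V d) {k m : ℕ} (h : pL x w k = pL x w m) : k = m := by
  have := congrArg List.length h
  simpa using this

/-- The four directions. -/
private abbrev Dirs (d : ℕ) (u : V d) : Prop :=
  u = (1, 0) ∨ u = (-1, 0) ∨ u = (0, 1) ∨ u = (0, -1)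

private lemma two_ne (hd : 3 ≤ d) : (1 : ZMod d) + 1 ≠ 0 := by
  haveI : NeZero d := ⟨by omega⟩
  have h : ((2 : ℕ) : ZMod d) ≠ 0 := fun h0 =>
    absurd (Nat.le_of_dvd (by norm_num) ((ZMod.natCast_eq_zero_iff 2 d).mp h0))
      (by omega)
  have h2 : ((2 : ℕ) : ZMod d) = 1 + 1 := by push_cast; ring
  rw [h2] at h
  exact h

private lemma one_ne (hd : 3 ≤ d) : (1 : ZMod d) ≠ 0 := by
  intro h
  exact two_ne hd (by rw [h, add_zero])

private lemma dirs_ne_zero (hd : 3 ≤ d) {u : V d} (hu : Dirs d u) : u ≠ 0 := by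
  have h1 := one_ne hd
  rcases hu with h | h | h | h <;> subst h <;>
    simp [Prod.ext_iff, h1, neg_eq_zero]

private lemma dirs_dbl_ne_zero (hd : 3 ≤ d) {u : V d} (hu : Dirs d u) : u + u ≠ 0 := by
  have h2 := two_ne hd
  intro h
  apply h2
  rcases hu with h' | h' | h' | h' <;> subst h'
  · have hf := congrArg Prod.fst h
    simp at hf
    linear_combination hf
  · have hf := congrArg Prod.fst h
    simp at hf
    linear_combination -hf
  · have hf := congrArg Prod.snd h
    simp at hf
    linear_combination hf
  · have hf := congrArg Prod.snd h
    simp at hf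
    linear_combination -hf

private lemma adj_of_sub (hd : 3 ≤ d) {u v : V d} (h : Dirs d (u - v)) :
    (Toric d).Adj u v := by
  refine ⟨fun he => dirs_ne_zero hd h ?_, h⟩
  rw [he, sub_self]

private lemma isWWR_pL (hd : 3 ≤ d) (x w : V d) (hw : Dirs d (-w)) (k : ℕ) :
    IsWWR d (pL x w k) := by
  constructor
  · rw [List.Chain', List.isChain_iff_getElem]
    intro j h
    rw [pL_length] at h
    rw [pL_getElem _ _ _ _ (by simp; omega),
      pL_getElem _ _ _ _ (by simp; omega)]
    apply adj_of_sub hd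
    have hsub : (x + j • w) - (x + (j + 1) • w) = -w := by
      rw [succ_nsmul]; abel
    rw [hsub]
    exact hw
  · intro j hj
    rw [pL_length] at hj
    rw [pL_getElem? (by omega), pL_getElem? hj]
    intro hsome
    have heq : x + j • w = x + (j + 2) • w := Option.some.inj hsome
    have h2 : (j + 2) • w = j • w + (w + w) := by
      rw [succ_nsmul, succ_nsmul]; abel
    rw [h2, ← add_assoc] at heq
    have : w + w = 0 := by linear_combination -heq
    have hnw : (-w) + (-w) ≠ 0 := dirs_dbl_ne_zero hd hw
    apply hnw
    rw [← neg_add, this, neg_zero]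

/-- The straight path from `a` towards `b`. -/
private def pE (a b : V d) (k : ℕ) : List (V d) := pL a (b - a) k

@[simp] private lemma pE_length (a b : V d) (k : ℕ) : (pE a b k).length = k := pL_length _ _ _

private lemma pE_two (a b : V d) : pE a b 2 = [a, b] := by
  have h : a + (b - a) = b := by ring
  rw [pE, pL_two, h]

private lemma pE_dropLast (a b : V d) (k : ℕ) : (pE a b (k + 1)).dropLast = pE a b k :=
  pL_dropLast _ _ _

private lemma pE_take2 (a b : V d) {k : ℕ} (h : 2 ≤ k) : (pE a b k).take 2 = [a, b] := by
  rw [← pE_two a b]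
  simp only [pE]
  rw [pL_take, min_eq_left h]

private lemma pE_ne (a b : V d) (hne : a ≠ b) {k m : ℕ} (hk : 1 ≤ k) (hm : 1 ≤ m) :
    pE a b k ≠ pE b a m := pL_ne _ _ _ _ hne hk hm

private lemma pE_inj (a b : V d) {k m : ℕ} (h : pE a b k = pE a b m) : k = m := pL_inj _ _ h

private lemma isWWR_pE (hd : 3 ≤ d) {a b : V d} (hab : (Toric d).Adj a b) (k : ℕ) :
    IsWWR d (pE a b k) := by
  apply isWWR_pL hd
  rw [neg_sub]
  exact hab.2

private lemma pE_treeEdgeA (hd : 3 ≤ d) {a b : V d} (hab : (Toric d).Adj a b) {i k : ℕ}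
    (h2 : 2 ≤ k) (hk : k ≤ i + 2) : IsTreeEdge d a b i (pE a b k) := by
  refine ⟨isWWR_pE hd hab k, Or.inl (pE_take2 a b h2), by simpa using h2, by simpa using hk, ?_⟩
  intro hlen
  rw [pE_length] at hlen
  subst hlen
  exact pE_two a b

private lemma pE_treeEdgeB (hd : 3 ≤ d) {a b : V d} (hab : (Toric d).Adj a b) {i k : ℕ}
    (h3 : 3 ≤ k) (hk : k ≤ i + 2) : IsTreeEdge d a b i (pE b a k) := by
  refine ⟨isWWR_pE hd hab.symm k, Or.inr (pE_take2 b a (by omega)), by simp; omega,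
    by simpa using hk, ?_⟩
  intro hlen
  rw [pE_length] at hlen
  omega

private lemma rootEdge_isTreeEdge (hd : 3 ≤ d) {a b : V d} (hab : (Toric d).Adj a b) (i : ℕ) :
    IsTreeEdge d a b i [a, b] := by
  have := pE_treeEdgeA hd hab (i := i) (k := 2) le_rfl (by omega)
  rwa [pE_two] at this

private lemma vertexBA (hd : 3 ≤ d) {a b : V d} (hab : (Toric d).Adj a b) {i : ℕ}
    (hi : 1 ≤ i) : IsTreeVertex d a b i [b, a] := by
  refine ⟨⟨chain'_two hab.symm, ?_⟩, Or.inr rfl, by simp, by simp; omega⟩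
  intro j hj
  simp at hj

private lemma finite_short (hd : 3 ≤ d) (n : ℕ) (P : List (V d) → Prop)
    (h : ∀ l, P l → l.length ≤ n) : {l : List (V d) | P l}.Finite := by
  haveI : NeZero d := ⟨by omega⟩
  exact (List.finite_length_le (V d) n).subset h

private lemma exists_other {α : Type*} (P : α → Prop) (hfin : {x | P x}.Finite) (x : α)
    (hx : P x) (h : (Nat.card {y // P y} : ZMod 2) = 0) : ∃ y, P y ∧ y ≠ x := by
  haveI : Finite {y // P y} := hfin.to_subtype
  haveI : Nonempty {y // P y} := ⟨⟨x, hx⟩⟩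
  have h2 : 2 ∣ Nat.card {y // P y} := (ZMod.natCast_eq_zero_iff _ 2).mp h
  have h1 : 0 < Nat.card {y // P y} := Nat.card_pos
  have h3 : 1 < Nat.card {y // P y} := by omega
  rw [Finite.one_lt_card_iff_nontrivial] at h3
  obtain ⟨y, hy⟩ := exists_ne (⟨x, hx⟩ : {y // P y})
  exact ⟨y.1, y.2, fun he => hy (Subtype.ext he)⟩

end Helpers

section Main

variable {d : ℕ}

private noncomputable def confC (a b : V d) : List (V d) → ZMod 2 := fun le =>
  @ite _ ((le = pE a b le.length ∧ 2 ≤ le.length) ∨ (le = pE b a le.length ∧ 3 ≤ le.length))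
    (Classical.propDecidable _) 1 0

private lemma confC_eq_one (a b : V d) (le : List (V d)) :
    confC a b le = 1 ↔
      (le = pE a b le.length ∧ 2 ≤ le.length) ∨ (le = pE b a le.length ∧ 3 ≤ le.length) := by
  unfold confC
  split
  · exact iff_of_true rfl ‹_›
  · exact iff_of_false (by decide) ‹_›

private lemma card_two_images {a b : V d} (hne : a ≠ b) (i : ℕ) (fA fB : ℕ → List (V d))
    (hAl : ∀ j < i + 1, (fA j).length = j + 2) (hAt : ∀ j < i + 1, (fA j).take 2 = [a, b])
    (hBl : ∀ j < i, (fB j).length = j + 3) (hBt : ∀ j < i, (fB j).take 2 = [b, a]) :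
    ((Finset.range (i + 1)).image fA ∪ (Finset.range i).image fB).card = 2 * i + 1 := by
  classical
  have hdisj : Disjoint ((Finset.range (i + 1)).image fA) ((Finset.range i).image fB) := by
    rw [Finset.disjoint_left]
    intro x hxA hxB
    rw [Finset.mem_image] at hxA hxB
    obtain ⟨j, hj, hfa⟩ := hxA
    obtain ⟨j', hj', hfb⟩ := hxB
    rw [Finset.mem_range] at hj hj'
    have : ([a, b] : List (V d)) = [b, a] := by
      rw [← hAt j hj, ← hBt j' hj', hfa, hfb]
    simp at this
    exact hne this.1
  have hcA : ((Finset.range (i + 1)).image fA).card = i + 1 := by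
    rw [Finset.card_image_of_injOn, Finset.card_range]
    intro j hj j' hj' h
    simp only [Finset.coe_range, Set.mem_Iio] at hj hj'
    have h1 := hAl j hj
    rw [h, hAl j' hj'] at h1
    omega
  have hcB : ((Finset.range i).image fB).card = i := by
    rw [Finset.card_image_of_injOn, Finset.card_range]
    intro j hj j' hj' h
    simp only [Finset.coe_range, Set.mem_Iio] at hj hj'
    have h1 := hBl j hj
    rw [h, hBl j' hj'] at h1
    omega
  rw [Finset.card_union_of_disjoint hdisj, hcA, hcB]
  omega

private lemma descend (hd : 3 ≤ d) {a b : V d} (hab : (Toric d).Adj a b) {i : ℕ}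
    {s : V d → ZMod 2} (hfar : ∀ lv, IsTreeVertex d a b i lv → s (vcheck lv) = 0)
    (C : List (V d) → ZMod 2) (hC : IsConfig d a b i s C)
    (le : List (V d)) (hle : IsTreeEdge d a b i le) (h1 : C le = 1) (hlen : le.length ≤ i + 1) :
    ∃ le', IsTreeEdge d a b i le' ∧ C le' = 1 ∧ le'.length = le.length + 1 ∧
      le'.take 2 = le.take 2 := by
  have hv : IsTreeVertex d a b i le := ⟨hle.1, hle.2.1, hle.2.2.1, hlen⟩
  have hcond := hC le hv
  rw [hfar le hv] at hcond
  have hfin : {l : List (V d) | IsTreeEdge d a b i l ∧ IncidentVE le l ∧ C l = 1}.Finite :=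
    finite_short hd (i + 2) _ (fun l h => h.1.2.2.2.1)
  obtain ⟨le', ⟨he', hinc, hc'⟩, hne⟩ :=
    exists_other _ hfin le ⟨hle, Or.inl rfl, h1⟩ hcond
  rcases hinc with h | h | ⟨hl2, hrev⟩
  · exact absurd h.symm hne
  · have h2le' : 2 ≤ le'.length := he'.2.2.1
    have hlen' : le'.length = le.length + 1 := by
      have hl : le.length = le'.length - 1 := by rw [h, List.length_dropLast]
      omega
    have hpre : le <+: le' := h ▸ List.dropLast_prefix le'
    have htake : le'.take 2 = le.take 2 := by
      have h2 := hpre.take 2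
      refine (h2.eq_of_length ?_).symm
      rw [List.length_take, List.length_take]
      have := hle.2.2.1
      omega
    exact ⟨le', he', hc', hlen', htake⟩
  · exfalso
    have hab' : le' = [a, b] := he'.2.2.2.2 hl2
    have hba : le = [b, a] := by rw [hrev, hab']; rfl
    have h2 : le.length = 2 := by rw [hba]; rfl
    have hab2 : le = [a, b] := hle.2.2.2.2 h2
    rw [hba] at hab2
    simp at hab2
    exact hab.ne hab2.2

private lemma chainA (hd : 3 ≤ d) {a b : V d} (hab : (Toric d).Adj a b) {i : ℕ}
    {s : V d → ZMod 2} (hfar : ∀ lv, IsTreeVertex d a b i lv → s (vcheck lv) = 0)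
    (C : List (V d) → ZMod 2) (hC : IsConfig d a b i s C) (hroot : C [a, b] = 1) :
    ∀ j, j ≤ i → ∃ le, IsTreeEdge d a b i le ∧ C le = 1 ∧ le.take 2 = [a, b] ∧
      le.length = j + 2 := by
  intro j
  induction j with
  | zero =>
    intro _
    exact ⟨[a, b], rootEdge_isTreeEdge hd hab i, hroot, rfl, rfl⟩
  | succ j ih =>
    intro hj
    obtain ⟨le, he, hc, ht, hl⟩ := ih (by omega)
    obtain ⟨le', he', hc', hl', ht'⟩ := descend hd hab hfar C hC le he hc (by omega)
    exact ⟨le', he', hc', by rw [ht', ht], by omega⟩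

private lemma chainB (hd : 3 ≤ d) {a b : V d} (hab : (Toric d).Adj a b) {i : ℕ}
    {s : V d → ZMod 2} (hfar : ∀ lv, IsTreeVertex d a b i lv → s (vcheck lv) = 0)
    (C : List (V d) → ZMod 2) (hC : IsConfig d a b i s C) (hroot : C [a, b] = 1) :
    ∀ j, j + 1 ≤ i → ∃ le, IsTreeEdge d a b i le ∧ C le = 1 ∧ le.take 2 = [b, a] ∧
      le.length = j + 3 := by
  intro j
  induction j with
  | zero =>
    intro hj
    have hv : IsTreeVertex d a b i [b, a] := vertexBA hd hab (by omega)
    have hcond := hC _ hv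
    rw [hfar _ hv] at hcond
    have hfin : {l : List (V d) | IsTreeEdge d a b i l ∧ IncidentVE [b, a] l ∧ C l = 1}.Finite :=
      finite_short hd (i + 2) _ (fun l h => h.1.2.2.2.1)
    have hxP : IsTreeEdge d a b i [a, b] ∧ IncidentVE [b, a] [a, b] ∧ C [a, b] = 1 :=
      ⟨rootEdge_isTreeEdge hd hab i, Or.inr (Or.inr ⟨rfl, rfl⟩), hroot⟩
    obtain ⟨le', ⟨he', hinc, hc'⟩, hne⟩ := exists_other _ hfin [a, b] hxP hcond
    rcases hinc with h | h | ⟨hl2, hrev⟩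
    · exfalso
      have hl2' : le'.length = 2 := by rw [← h]; rfl
      have := he'.2.2.2.2 hl2'
      rw [← h] at this
      simp at this
      exact hab.ne this.2
    · have h2le' : 2 ≤ le'.length := he'.2.2.1
      have hlen' : le'.length = 3 := by
        have hl : ([b, a] : List (V d)).length = le'.length - 1 := by
          rw [h, List.length_dropLast]
        simp at hl
        omega
      have hpre : ([b, a] : List (V d)) <+: le' := h ▸ List.dropLast_prefix le'
      have htake : le'.take 2 = [b, a] := by
        have h2 := hpre.take 2
        have h3 := h2.eq_of_length (by rw [List.length_take, List.length_take]; simp; omega)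
        rw [show (([b, a] : List (V d)).take 2) = [b, a] from rfl] at h3
        exact h3.symm
      exact ⟨le', he', hc', htake, by omega⟩
    · exact absurd (he'.2.2.2.2 hl2) hne
  | succ j ih =>
    intro hj
    obtain ⟨le, he, hc, ht, hl⟩ := ih (by omega)
    obtain ⟨le', he', hc', hl', ht'⟩ := descend hd hab hfar C hC le he hc (by omega)
    exact ⟨le', he', hc', by rw [ht', ht], by omega⟩

private lemma lowerW (hd : 3 ≤ d) {a b : V d} (hab : (Toric d).Adj a b) {i : ℕ}
    {s : V d → ZMod 2} (hfar : ∀ lv, IsTreeVertex d a b i lv → s (vcheck lv) = 0)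
    (C : List (V d) → ZMod 2) (hC : IsConfig d a b i s C) (hroot : C [a, b] = 1) :
    2 * i + 1 ≤ cweight d a b i C := by
  classical
  have hA' : ∀ j : ℕ, ∃ le : List (V d), j ≤ i →
      IsTreeEdge d a b i le ∧ C le = 1 ∧ le.take 2 = [a, b] ∧ le.length = j + 2 := by
    intro j
    by_cases h : j ≤ i
    · obtain ⟨le, hle⟩ := chainA hd hab hfar C hC hroot j h
      exact ⟨le, fun _ => hle⟩
    · exact ⟨[], fun h' => absurd h' h⟩
  have hB' : ∀ j : ℕ, ∃ le : List (V d), j + 1 ≤ i →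
      IsTreeEdge d a b i le ∧ C le = 1 ∧ le.take 2 = [b, a] ∧ le.length = j + 3 := by
    intro j
    by_cases h : j + 1 ≤ i
    · obtain ⟨le, hle⟩ := chainB hd hab hfar C hC hroot j h
      exact ⟨le, fun _ => hle⟩
    · exact ⟨[], fun h' => absurd h' h⟩
  choose gA hgA using hA'
  choose gB hgB using hB'
  set F := (Finset.range (i + 1)).image gA ∪ (Finset.range i).image gB with hF
  have hcard : F.card = 2 * i + 1 :=
    card_two_images hab.ne i gA gB
      (fun j hj => (hgA j (by omega)).2.2.2) (fun j hj => (hgA j (by omega)).2.2.1)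
      (fun j hj => (hgB j (by omega)).2.2.2) (fun j hj => (hgB j (by omega)).2.2.1)
  have hsub : (↑F : Set (List (V d))) ⊆ {l | IsTreeEdge d a b i l ∧ C l = 1} := by
    intro x hx
    rw [Finset.mem_coe, hF, Finset.mem_union, Finset.mem_image, Finset.mem_image] at hx
    rcases hx with ⟨j, hj, rfl⟩ | ⟨j, hj, rfl⟩
    · rw [Finset.mem_range] at hj
      exact ⟨(hgA j (by omega)).1, (hgA j (by omega)).2.1⟩
    · rw [Finset.mem_range] at hj
      exact ⟨(hgB j (by omega)).1, (hgB j (by omega)).2.1⟩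
  have hfin : {l : List (V d) | IsTreeEdge d a b i l ∧ C l = 1}.Finite :=
    finite_short hd (i + 2) _ (fun l h => h.1.2.2.2.1)
  calc 2 * i + 1 = F.card := hcard.symm
    _ = (↑F : Set (List (V d))).ncard := (Set.ncard_coe_finset F).symm
    _ ≤ {l : List (V d) | IsTreeEdge d a b i l ∧ C l = 1}.ncard := Set.ncard_le_ncard hsub hfin
    _ = Nat.card {le : List (V d) // IsTreeEdge d a b i le ∧ C le = 1} :=
        (Nat.card_coe_set_eq _).symm
    _ = cweight d a b i C := rfl

end Main

section Upper

variable {d : ℕ}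

private lemma upperW (hd : 3 ≤ d) {a b : V d} (hab : (Toric d).Adj a b) (i : ℕ)
    {s : V d → ZMod 2} (hfar : ∀ lv, IsTreeVertex d a b i lv → s (vcheck lv) = 0) :
    ∃ C : List (V d) → ZMod 2, IsConfig d a b i s C ∧ C [a, b] = 1 ∧
      cweight d a b i C = 2 * i + 1 := by
  classical
  refine ⟨confC a b, ?_, ?_, ?_⟩
  · -- IsConfig
    intro lv hlv
    rw [hfar lv hlv]
    have hn2 : 2 ≤ lv.length := hlv.2.2.1
    have hni : lv.length ≤ i + 1 := hlv.2.2.2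
    -- incidence analysis
    have hIncLen : ∀ le, IncidentVE lv le → IsTreeEdge d a b i le →
        lv = le ∨ (lv = le.dropLast ∧ le.length = lv.length + 1) ∨
          (le = [a, b] ∧ lv = [b, a] ∧ lv.length = 2) := by
      intro le hinc he
      rcases hinc with h | h | ⟨hl2, hrev⟩
      · exact Or.inl h
      · refine Or.inr (Or.inl ⟨h, ?_⟩)
        have h1 : lv.length = le.length - 1 := by rw [h, List.length_dropLast]
        have h2 := he.2.2.1
        omega
      · have hab' : le = [a, b] := he.2.2.2.2 hl2
        refine Or.inr (Or.inr ⟨hab', ?_, ?_⟩)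
        · rw [hrev, hab']; rfl
        · rw [hrev, List.length_reverse, hl2]
    by_cases hA : lv = pE a b lv.length
    · have hset : {le : List (V d) | IsTreeEdge d a b i le ∧ IncidentVE lv le ∧
          confC a b le = 1} = {pE a b lv.length, pE a b (lv.length + 1)} := by
        ext le
        simp only [Set.mem_setOf_eq, Set.mem_insert_iff, Set.mem_singleton_iff]
        constructor
        · rintro ⟨he, hinc, hc⟩
          rw [confC_eq_one] at hc
          rcases hIncLen le hinc he with h | ⟨h, hlen⟩ | ⟨hle, hlv, hn2'⟩
          · have hlen : le.length = lv.length := by rw [← h]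
            rcases hc with ⟨hc1, _⟩ | ⟨hc1, _⟩
            · left; rw [hc1, hlen]
            · exfalso
              have h2 : lv = pE b a lv.length := h.trans (by rw [hc1, hlen])
              exact pE_ne a b hab.ne (by omega) (by omega) (hA.symm.trans h2)
          · rcases hc with ⟨hc1, _⟩ | ⟨hc1, _⟩
            · right; rw [hc1, hlen]
            · exfalso
              rw [hlen] at hc1
              have h2 : lv = pE b a lv.length := h.trans (by rw [hc1, pE_dropLast])
              exact pE_ne a b hab.ne (by omega) (by omega) (hA.symm.trans h2)
          · exfalso
            have h2 : lv = pE a b lv.length := hA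
            rw [hn2', pE_two] at h2
            have h3 := hlv.symm.trans h2
            simp at h3
            exact hab.ne h3.2
        · rintro (rfl | rfl)
          · refine ⟨pE_treeEdgeA hd hab hn2 (by omega), Or.inl hA, ?_⟩
            rw [confC_eq_one]
            left
            constructor
            · rw [pE_length]
            · rw [pE_length]; exact hn2
          · refine ⟨pE_treeEdgeA hd hab (by omega) (by omega), Or.inr (Or.inl ?_), ?_⟩
            · rw [pE_dropLast]; exact hA
            · rw [confC_eq_one]
              left
              constructor
              · rw [pE_length]
              · rw [pE_length]; omega
      have hcard : Nat.card {le : List (V d) // IsTreeEdge d a b i le ∧ IncidentVE lv le ∧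
          confC a b le = 1} = 2 := by
        have h1 : Nat.card {le : List (V d) // IsTreeEdge d a b i le ∧ IncidentVE lv le ∧
            confC a b le = 1} = {le : List (V d) | IsTreeEdge d a b i le ∧ IncidentVE lv le ∧
            confC a b le = 1}.ncard := Nat.card_coe_set_eq _
        rw [h1, hset]
        exact Set.ncard_pair (fun h => by have := pE_inj a b h; omega)
      rw [hcard]
      exact ZMod.natCast_self 2
    · by_cases hB : lv = pE b a lv.length
      · rcases Nat.lt_or_ge lv.length 3 with hn3 | hn3
        · -- lv.length = 2, lv = [b,a]
          have hn2' : lv.length = 2 := by omega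
          have hi1 : 1 ≤ i := by omega
          have hset : {le : List (V d) | IsTreeEdge d a b i le ∧ IncidentVE lv le ∧
              confC a b le = 1} = {pE a b 2, pE b a 3} := by
            ext le
            simp only [Set.mem_setOf_eq, Set.mem_insert_iff, Set.mem_singleton_iff]
            constructor
            · rintro ⟨he, hinc, hc⟩
              rw [confC_eq_one] at hc
              rcases hIncLen le hinc he with h | ⟨h, hlen⟩ | ⟨hle, hlv, _⟩
              · have hlen : le.length = lv.length := by rw [← h]
                rcases hc with ⟨hc1, _⟩ | ⟨hc1, hc3⟩
                · left; rw [hc1, hlen, hn2']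
                · exfalso; omega
              · rcases hc with ⟨hc1, _⟩ | ⟨hc1, _⟩
                · exfalso
                  rw [hlen, hn2'] at hc1
                  have h2 : lv = pE a b 2 := h.trans (by rw [hc1, pE_dropLast])
                  apply hA
                  rw [hn2']
                  exact h2
                · right
                  rw [hlen, hn2'] at hc1
                  rw [show (2 : ℕ) + 1 = 3 from rfl] at hc1
                  exact hc1
              · left
                rw [hle, pE_two]
            · rintro (rfl | rfl)
              · refine ⟨pE_treeEdgeA hd hab (by omega) (by omega), Or.inr (Or.inr ⟨?_, ?_⟩), ?_⟩
                · rw [pE_length]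
                · rw [pE_two]
                  rw [show ([a, b] : List (V d)).reverse = [b, a] from rfl]
                  rw [hB, hn2', pE_two]
                · rw [confC_eq_one]
                  left
                  constructor
                  · rw [pE_length]
                  · rw [pE_length]
              · refine ⟨pE_treeEdgeB hd hab (by omega) (by omega), Or.inr (Or.inl ?_), ?_⟩
                · rw [show (3 : ℕ) = 2 + 1 from rfl, pE_dropLast, hB, hn2']
                · rw [confC_eq_one]
                  right
                  constructor
                  · rw [pE_length]
                  · rw [pE_length]
          have hcard : Nat.card {le : List (V d) // IsTreeEdge d a b i le ∧ IncidentVE lv le ∧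
              confC a b le = 1} = 2 := by
            have h1 : Nat.card {le : List (V d) // IsTreeEdge d a b i le ∧ IncidentVE lv le ∧
                confC a b le = 1} = {le : List (V d) | IsTreeEdge d a b i le ∧ IncidentVE lv le ∧
                confC a b le = 1}.ncard := Nat.card_coe_set_eq _
            rw [h1, hset]
            exact Set.ncard_pair (pE_ne a b hab.ne (by omega) (by omega))
          rw [hcard]
          exact ZMod.natCast_self 2
        · -- 3 ≤ lv.length
          have hset : {le : List (V d) | IsTreeEdge d a b i le ∧ IncidentVE lv le ∧
              confC a b le = 1} = {pE b a lv.length, pE b a (lv.length + 1)} := by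
            ext le
            simp only [Set.mem_setOf_eq, Set.mem_insert_iff, Set.mem_singleton_iff]
            constructor
            · rintro ⟨he, hinc, hc⟩
              rw [confC_eq_one] at hc
              rcases hIncLen le hinc he with h | ⟨h, hlen⟩ | ⟨hle, hlv, hn2'⟩
              · have hlen : le.length = lv.length := by rw [← h]
                rcases hc with ⟨hc1, _⟩ | ⟨hc1, _⟩
                · exfalso
                  have h2 : lv = pE a b lv.length := h.trans (by rw [hc1, hlen])
                  exact pE_ne a b hab.ne (by omega) (by omega) (h2.symm.trans hB)
                · left; rw [hc1, hlen]
              · rcases hc with ⟨hc1, _⟩ | ⟨hc1, _⟩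
                · exfalso
                  rw [hlen] at hc1
                  have h2 : lv = pE a b lv.length := h.trans (by rw [hc1, pE_dropLast])
                  exact pE_ne a b hab.ne (by omega) (by omega) (h2.symm.trans hB)
                · right
                  rw [hlen] at hc1
                  exact hc1
              · omega
            · rintro (rfl | rfl)
              · refine ⟨pE_treeEdgeB hd hab hn3 (by omega), Or.inl hB, ?_⟩
                rw [confC_eq_one]
                right
                constructor
                · rw [pE_length]
                · rw [pE_length]; exact hn3
              · refine ⟨pE_treeEdgeB hd hab (by omega) (by omega), Or.inr (Or.inl ?_), ?_⟩
                · rw [pE_dropLast]; exact hB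
                · rw [confC_eq_one]
                  right
                  constructor
                  · rw [pE_length]
                  · rw [pE_length]; omega
          have hcard : Nat.card {le : List (V d) // IsTreeEdge d a b i le ∧ IncidentVE lv le ∧
              confC a b le = 1} = 2 := by
            have h1 : Nat.card {le : List (V d) // IsTreeEdge d a b i le ∧ IncidentVE lv le ∧
                confC a b le = 1} = {le : List (V d) | IsTreeEdge d a b i le ∧ IncidentVE lv le ∧
                confC a b le = 1}.ncard := Nat.card_coe_set_eq _
            rw [h1, hset]
            exact Set.ncard_pair (fun h => by have := pE_inj b a h; omega)
          rw [hcard]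
          exact ZMod.natCast_self 2
      · -- neither: empty incident set
        have hset : {le : List (V d) | IsTreeEdge d a b i le ∧ IncidentVE lv le ∧
            confC a b le = 1} = ∅ := by
          rw [Set.eq_empty_iff_forall_notMem]
          rintro le ⟨he, hinc, hc⟩
          rw [confC_eq_one] at hc
          rcases hIncLen le hinc he with h | ⟨h, hlen⟩ | ⟨hle, hlv, hn2'⟩
          · have hlen : le.length = lv.length := by rw [← h]
            rcases hc with ⟨hc1, _⟩ | ⟨hc1, _⟩
            · exact hA (h.trans (by rw [hc1, hlen]))
            · exact hB (h.trans (by rw [hc1, hlen]))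
          · rcases hc with ⟨hc1, _⟩ | ⟨hc1, _⟩
            · rw [hlen] at hc1
              exact hA (h.trans (by rw [hc1, pE_dropLast]))
            · rw [hlen] at hc1
              exact hB (h.trans (by rw [hc1, pE_dropLast]))
          · apply hB
            rw [hn2', pE_two]
            exact hlv
        have hcard : Nat.card {le : List (V d) // IsTreeEdge d a b i le ∧ IncidentVE lv le ∧
            confC a b le = 1} = 0 := by
          have h1 : Nat.card {le : List (V d) // IsTreeEdge d a b i le ∧ IncidentVE lv le ∧
              confC a b le = 1} = {le : List (V d) | IsTreeEdge d a b i le ∧ IncidentVE lv le ∧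
              confC a b le = 1}.ncard := Nat.card_coe_set_eq _
          rw [h1, hset, Set.ncard_empty]
        rw [hcard, Nat.cast_zero]
  · -- root labeled
    rw [confC_eq_one]
    left
    constructor
    · rw [show ([a, b] : List (V d)).length = 2 from rfl, pE_two]
    · rw [show ([a, b] : List (V d)).length = 2 from rfl]
  · -- weight
    set F := (Finset.range (i + 1)).image (fun j => pE a b (j + 2)) ∪
      (Finset.range i).image (fun j => pE b a (j + 3)) with hF
    have hset : {l : List (V d) | IsTreeEdge d a b i l ∧ confC a b l = 1} =
        (↑F : Set (List (V d))) := by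
      ext le
      constructor
      · rintro ⟨he, hc⟩
        rw [confC_eq_one] at hc
        have hlen := he.2.2.2.1
        rw [Finset.mem_coe, hF, Finset.mem_union, Finset.mem_image, Finset.mem_image]
        rcases hc with ⟨hc1, h2⟩ | ⟨hc1, h3⟩
        · left
          refine ⟨le.length - 2, Finset.mem_range.mpr (by omega), ?_⟩
          rw [show le.length - 2 + 2 = le.length from by omega]
          exact hc1.symm
        · right
          refine ⟨le.length - 3, Finset.mem_range.mpr (by omega), ?_⟩
          rw [show le.length - 3 + 3 = le.length from by omega]
          exact hc1.symm
      · intro hle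
        rw [Finset.mem_coe, hF, Finset.mem_union, Finset.mem_image, Finset.mem_image] at hle
        rcases hle with ⟨j, hj, rfl⟩ | ⟨j, hj, rfl⟩
        · rw [Finset.mem_range] at hj
          refine ⟨pE_treeEdgeA hd hab (by omega) (by omega), ?_⟩
          rw [confC_eq_one]
          left
          constructor
          · rw [pE_length]
          · rw [pE_length]; omega
        · rw [Finset.mem_range] at hj
          refine ⟨pE_treeEdgeB hd hab (by omega) (by omega), ?_⟩
          rw [confC_eq_one]
          right
          constructor
          · rw [pE_length]
          · rw [pE_length]; omega
    have hcard : F.card = 2 * i + 1 :=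
      card_two_images hab.ne i _ _
        (fun j _ => by rw [pE_length]) (fun j _ => pE_take2 a b (by omega))
        (fun j _ => by rw [pE_length]) (fun j _ => pE_take2 b a (by omega))
    calc cweight d a b i (confC a b)
        = Nat.card {le : List (V d) // IsTreeEdge d a b i le ∧ confC a b le = 1} := rfl
      _ = {l : List (V d) | IsTreeEdge d a b i l ∧ confC a b l = 1}.ncard :=
          Nat.card_coe_set_eq _
      _ = (↑F : Set (List (V d))).ncard := by rw [hset]
      _ = F.card := Set.ncard_coe_finset F
      _ = 2 * i + 1 := hcard

private lemma core (d : ℕ) (hd : 3 ≤ d) (s : V d → ZMod 2) (a b : V d)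
    (hab : (Toric d).Adj a b) (i : ℕ)
    (hfar : ∀ lv, IsTreeVertex d a b i lv → s (vcheck lv) = 0) :
    minW d a b i s 0 = 0 ∧ minW d a b i s 1 = 1 + 2 * i := by
  constructor
  · apply le_antisymm _ (Nat.zero_le _)
    apply Nat.sInf_le
    refine ⟨fun _ => 0, ?_, rfl, ?_⟩
    · intro lv hlv
      rw [hfar lv hlv]
      haveI : IsEmpty {le : List (V d) // IsTreeEdge d a b i le ∧ IncidentVE lv le ∧
          (0 : ZMod 2) = 1} := ⟨fun x => absurd x.2.2.2 (by decide)⟩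
      rw [Nat.card_of_isEmpty, Nat.cast_zero]
    · haveI : IsEmpty {le : List (V d) // IsTreeEdge d a b i le ∧ (0 : ZMod 2) = 1} :=
        ⟨fun x => absurd x.2.2 (by decide)⟩
      exact Nat.card_of_isEmpty
  · obtain ⟨C0, hcfg, hr, hw⟩ := upperW hd hab i hfar
    have hmem : 2 * i + 1 ∈ {n | ∃ C, IsConfig d a b i s C ∧ C [a, b] = 1 ∧
        cweight d a b i C = n} := ⟨C0, hcfg, hr, hw⟩
    have h1 : minW d a b i s 1 ≤ 2 * i + 1 := Nat.sInf_le hmem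
    have h2 : 2 * i + 1 ≤ minW d a b i s 1 := by
      apply le_csInf ⟨_, hmem⟩
      rintro n ⟨C, hC, hr', rfl⟩
      exact lowerW hd hab hfar C hC hr'
    omega

end Upper

/-- **Claim (APP value far from the syndrome).** -/
theorem app_far_from_syndrome (d : ℕ) (hd : 3 ≤ d) (s : V d → ZMod 2)
    (a b : V d) (hab : (Toric d).Adj a b) (i : ℕ)
    (hfar : ∀ lv : List (V d), IsTreeVertex d a b i lv → s (vcheck lv) = 0) :
    minW d a b i s 0 = 0 ∧ minW d a b i s 1 = 1 + 2 * i ∧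
      APP d s i (Sym2.mk a b) = 1 + 2 * i := by
  have hfar' : ∀ lv, IsTreeVertex d b a i lv → s (vcheck lv) = 0 := by
    intro lv hlv
    exact hfar lv ⟨hlv.1, Or.symm hlv.2.1, hlv.2.2⟩
  obtain ⟨h0, h1⟩ := core d hd s a b hab i hfar
  obtain ⟨h0', h1'⟩ := core d hd s b a hab.symm i hfar'
  refine ⟨h0, h1, ?_⟩
  have happ : APP d s i (Sym2.mk a b) = min (APPo d s i a b) (APPo d s i b a) := by
    unfold APP
    exact Sym2.lift_mk _ _ _
  rw [happ]
  unfold APPo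
  rw [h0, h1, h0', h1', min_self]
  push_cast
  ring

end ToricMS
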